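/- Let τ > 0, δ_T > 0 and T_stim > 0, let f(I) = I + δ_T(τ·ln(I/(I−1)) − T_stim), and let I* = 1/(1 − e^{−T_stim/τ}). Then f'(I*) = 0 if and only if δ_T = I*(I* − 1)/τ; this value of δ_T is the optimal learning rate at which the slope of f at its fixed point vanishes. -/

import Mathlib

/-! Since `d/dI log (I / (I - 1)) = -1 / (I (I - 1))`, the map has slope `1 - δ_T τ / (I (I - 1))`
at every `I ∉ {0, 1}`, and `I* > 1` because `0 < e^{-T_stim/τ} < 1`. -/

open Real

noncomputable def periodMap (δ τ T I : ℝ) : ℝ := I + δ * (τ * log (I / (I - 1)) - T)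

lemma one_lt_one_div_one_sub_exp_neg {x : ℝ} (hx : 0 < x) : 1 < 1 / (1 - exp (-x)) := by
  have hexp_pos : 0 < exp (-x) := exp_pos _
  have hexp_lt : exp (-x) < 1 := exp_lt_one_iff.mpr (neg_neg_of_pos hx)
  rw [lt_div_iff₀ (by linarith)]
  linarith

lemma hasDerivAt_log_div_sub_one {x : ℝ} (hx₀ : x ≠ 0) (hx₁ : x - 1 ≠ 0) :
    HasDerivAt (fun I => log (I / (I - 1))) (-(1 / (x * (x - 1)))) x := by
  have hquot : HasDerivAt (fun I => I / (I - 1)) ((1 * (x - 1) - x * 1) / (x - 1) ^ 2) x :=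
    (hasDerivAt_id x).div ((hasDerivAt_id x).sub_const 1) hx₁
  convert hquot.log (div_ne_zero hx₀ hx₁) using 1
  field_simp
  ring

lemma hasDerivAt_periodMap (δ τ T : ℝ) {x : ℝ} (hx₀ : x ≠ 0) (hx₁ : x - 1 ≠ 0) :
    HasDerivAt (periodMap δ τ T) (1 - δ * τ / (x * (x - 1))) x := by
  refine ((hasDerivAt_id' x).add
    ((((hasDerivAt_log_div_sub_one hx₀ hx₁).const_mul τ).sub_const T).const_mul δ)).congr_deriv ?_
  ring

lemma one_sub_div_eq_zero_iff {δ τ c : ℝ} (hτ : τ ≠ 0) (hc : c ≠ 0) :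
    1 - δ * τ / c = 0 ↔ δ = c / τ := by
  rw [sub_eq_zero, eq_comm, div_eq_one_iff_eq hc, eq_div_iff hτ]

theorem period_map_optimal_learning_rate_general
    (τ δT Tstim : ℝ) (hτ : 0 < τ) (hTstim : 0 < Tstim)
    (f : ℝ → ℝ) (hf : ∀ I, f I = I + δT * (τ * Real.log (I / (I - 1)) - Tstim))
    (Istar : ℝ) (hIstar : Istar = 1 / (1 - Real.exp (-Tstim / τ))) :
    deriv f Istar = 0 ↔ δT = Istar * (Istar - 1) / τ := by
  have hIstar_gt : 1 < Istar := by
    rw [hIstar, neg_div]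
    exact one_lt_one_div_one_sub_exp_neg (div_pos hTstim hτ)
  have hx₀ : Istar ≠ 0 := (zero_lt_one.trans hIstar_gt).ne'
  have hx₁ : Istar - 1 ≠ 0 := sub_ne_zero.mpr hIstar_gt.ne'
  have hf_eq : f = periodMap δT τ Tstim := funext hf
  rw [hf_eq, (hasDerivAt_periodMap δT τ Tstim hx₀ hx₁).deriv]
  exact one_sub_div_eq_zero_iff hτ.ne' (mul_ne_zero hx₀ hx₁)

/-- `f'(I*) = 0` if and only if `δ_T = I*(I* − 1)/τ`: the optimal learning rate. -/
theorem period_map_optimal_learning_rate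
    (τ δT Tstim : ℝ) (hτ : 0 < τ) (hδT : 0 < δT) (hTstim : 0 < Tstim)
    (f : ℝ → ℝ) (hf : ∀ I, f I = I + δT * (τ * Real.log (I / (I - 1)) - Tstim))
    (Istar : ℝ) (hIstar : Istar = 1 / (1 - Real.exp (-Tstim / τ))) :
    deriv f Istar = 0 ↔ δT = Istar * (Istar - 1) / τ :=
  period_map_optimal_learning_rate_general τ δT Tstim hτ hTstim f hf Istar hIstar
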